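/- CliffordCS(3) equals the subgroup of U(8,ℂ) generated by {K₀} ∪ X_P ∪ X_D; i.e., every 3-qubit Clifford+CS operator can be written as an alternating product of elements of the finite subgroup PD = ⟨X_P ∪ X_D⟩ and the single gate K₀. -/
import Mathlib


noncomputable section
open Matrix Complex

abbrev M8 := Matrix (Fin 8) (Fin 8) ℂ
abbrev U8 := Matrix.unitaryGroup (Fin 8) ℂ

namespace CCS

/-- qubit 0 (most significant bit) of a basis index. -/
def b0 (m : Fin 8) : ℕ := m.val / 4
def b1 (m : Fin 8) : ℕ := m.val / 2 % 2
def b2 (m : Fin 8) : ℕ := m.val % 2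

/-- basis index with qubit values `a`, `b`, `c` (mod 2). -/
def idx (a b c : ℕ) : Fin 8 := ⟨4 * (a % 2) + 2 * (b % 2) + c % 2, by omega⟩

/-- the permutation matrix sending `e_s` to `e_{σ s}`. -/
def permMat (σ : Fin 8 → Fin 8) : M8 := fun r s => if r = σ s then 1 else 0

def q0 (m : Fin 8) : Fin 2 := ⟨b0 m, by simp [b0]; omega⟩
def q1 (m : Fin 8) : Fin 2 := ⟨b1 m, by simp [b1]; omega⟩
def q2 (m : Fin 8) : Fin 2 := ⟨b2 m, by simp [b2]; omega⟩

def Kmat : Matrix (Fin 2) (Fin 2) ℂ := (1 / (1 + I)) • !![1, 1; 1, -1]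
def Smat : Matrix (Fin 2) (Fin 2) ℂ := !![1, 0; 0, I]

/-- `A ⊗ I₂ ⊗ I₂` -/
def K0 : M8 := fun r s => Kmat (q0 r) (q0 s) * (if q1 r = q1 s ∧ q2 r = q2 s then 1 else 0)
def K1 : M8 := fun r s => Kmat (q1 r) (q1 s) * (if q0 r = q0 s ∧ q2 r = q2 s then 1 else 0)
def K2 : M8 := fun r s => Kmat (q2 r) (q2 s) * (if q0 r = q0 s ∧ q1 r = q1 s then 1 else 0)

def omega8 : M8 := Matrix.diagonal fun _ => I
def S0 : M8 := Matrix.diagonal fun m => I ^ b0 m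
def S1 : M8 := Matrix.diagonal fun m => I ^ b1 m
def S2 : M8 := Matrix.diagonal fun m => I ^ b2 m
def CS01 : M8 := Matrix.diagonal fun m => I ^ (b0 m * b1 m)
def CS12 : M8 := Matrix.diagonal fun m => I ^ (b1 m * b2 m)
def CS02 : M8 := Matrix.diagonal fun m => I ^ (b0 m * b2 m)
def CCZ : M8 := Matrix.diagonal fun m => (-1 : ℂ) ^ (b0 m * b1 m * b2 m)

def X0 : M8 := permMat fun m => idx (b0 m + 1) (b1 m) (b2 m)
def X1 : M8 := permMat fun m => idx (b0 m) (b1 m + 1) (b2 m)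
def X2 : M8 := permMat fun m => idx (b0 m) (b1 m) (b2 m + 1)
def CX01 : M8 := permMat fun m => idx (b0 m) (b1 m + b0 m) (b2 m)
def CX10 : M8 := permMat fun m => idx (b0 m + b1 m) (b1 m) (b2 m)
def CX12 : M8 := permMat fun m => idx (b0 m) (b1 m) (b2 m + b1 m)
def CX21 : M8 := permMat fun m => idx (b0 m) (b1 m + b2 m) (b2 m)
def CX02 : M8 := permMat fun m => idx (b0 m) (b1 m) (b2 m + b0 m)
def CX20 : M8 := permMat fun m => idx (b0 m + b2 m) (b1 m) (b2 m)
def CCX0 : M8 := permMat fun m => idx (b0 m + b1 m * b2 m) (b1 m) (b2 m)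
def Swap01 : M8 := permMat fun m => idx (b1 m) (b0 m) (b2 m)
def Swap12 : M8 := permMat fun m => idx (b0 m) (b2 m) (b1 m)

/-- The ring ℤ[1/2, i]. -/
def Zhi : Subring ℂ := Subring.closure {1 / 2, I}

/-- The 3-qubit Clifford+CS group, as a subgroup of U(8,ℂ). -/
def CliffordCS3 : Subgroup U8 :=
  Subgroup.closure {u : U8 | (u : M8) ∈ ({omega8, K0, K1, K2, S0, S1, S2, CS01, CS12} : Set M8)}

end CCS

noncomputable section
open CCS


namespace CCS

set_option maxHeartbeats 4000000

lemma fv0 : ((0:Fin 8):ℕ) = 0 := rfl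
lemma fv1 : ((1:Fin 8):ℕ) = 1 := rfl
lemma fv2 : ((2:Fin 8):ℕ) = 2 := rfl
lemma fv3 : ((3:Fin 8):ℕ) = 3 := rfl
lemma fv4 : ((4:Fin 8):ℕ) = 4 := rfl
lemma fv5 : ((5:Fin 8):ℕ) = 5 := rfl
lemma fv6 : ((6:Fin 8):ℕ) = 6 := rfl
lemma fv7 : ((7:Fin 8):ℕ) = 7 := rfl

/-! ### permutation matrix machinery -/

lemma permMat_mul (σ τ : Fin 8 → Fin 8) : permMat σ * permMat τ = permMat (σ ∘ τ) := by
  ext r s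
  rw [Matrix.mul_apply,
    Finset.sum_eq_single (τ s) (fun k _ hk => by simp [permMat, hk])
      (fun hk => absurd (Finset.mem_univ _) hk)]
  simp [permMat]

lemma permMat_id : permMat id = 1 := by
  ext r s
  simp [permMat, Matrix.one_apply]

lemma star_permMat (σ : Fin 8 → Fin 8) (h : ∀ m, σ (σ m) = m) :
    star (permMat σ) = permMat σ := by
  ext r s
  simp only [Matrix.star_apply, permMat]
  by_cases hc : s = σ r
  · subst hc; simp [h]
  · have hc2 : r ≠ σ s := fun hh => hc (by rw [hh, h])
    simp [hc, hc2]

lemma permMat_unitary (σ : Fin 8 → Fin 8) (h : ∀ m, σ (σ m) = m) :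
    permMat σ ∈ Matrix.unitaryGroup (Fin 8) ℂ := by
  rw [Matrix.mem_unitaryGroup_iff, star_permMat σ h, permMat_mul,
    show σ ∘ σ = id from funext h, permMat_id]

lemma diag_unitary (d : Fin 8 → ℂ) (h : ∀ m, d m * star (d m) = 1) :
    Matrix.diagonal d ∈ Matrix.unitaryGroup (Fin 8) ℂ := by
  rw [Matrix.mem_unitaryGroup_iff, Matrix.star_eq_conjTranspose, Matrix.diagonal_conjTranspose,
    Matrix.diagonal_mul_diagonal]
  ext i j
  by_cases hij : i = j
  · subst hij; simpa using h i
  · simp [Matrix.diagonal_apply_ne _ hij, Matrix.one_apply_ne hij]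

lemma mul_permMat (A : M8) (σ : Fin 8 → Fin 8) :
    A * permMat σ = Matrix.of fun r s => A r (σ s) := by
  ext r s
  rw [Matrix.mul_apply,
    Finset.sum_eq_single (σ s) (fun k _ hk => by simp [permMat, hk])
      (fun hk => absurd (Finset.mem_univ _) hk)]
  simp [permMat]

lemma permMat_mul_left (σ : Fin 8 → Fin 8) (h : ∀ m, σ (σ m) = m) (A : M8) :
    permMat σ * A = Matrix.of fun r s => A (σ r) s := by
  ext r s
  rw [Matrix.mul_apply,
    Finset.sum_eq_single (σ r) (fun k _ hk => by
      have hne : r ≠ σ k := fun hh => hk (by rw [hh, h])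
      simp [permMat, hne])
      (fun hk => absurd (Finset.mem_univ _) hk)]
  simp [permMat, h]

lemma perm_conj (σ : Fin 8 → Fin 8) (h : ∀ m, σ (σ m) = m) (A : M8) :
    permMat σ * A * permMat σ = Matrix.of fun r s => A (σ r) (σ s) := by
  rw [permMat_mul_left σ h A, mul_permMat]
  rfl

lemma perm_conj_diag (σ : Fin 8 → Fin 8) (h : ∀ m, σ (σ m) = m) (d : Fin 8 → ℂ) :
    permMat σ * Matrix.diagonal d * permMat σ = Matrix.diagonal fun m => d (σ m) := by
  rw [perm_conj σ h]
  ext r s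
  by_cases hrs : r = s
  · subst hrs; simp
  · have hne : σ r ≠ σ s := fun hh => hrs (by rw [← h r, hh, h])
    simp [Matrix.of_apply, Matrix.diagonal_apply_ne _ hrs, Matrix.diagonal_apply_ne _ hne]

/-! ### swap functions -/

def sw01f : Fin 8 → Fin 8 := fun m => idx (b1 m) (b0 m) (b2 m)
def sw12f : Fin 8 → Fin 8 := fun m => idx (b0 m) (b2 m) (b1 m)

lemma sw01f_invol : ∀ m, sw01f (sw01f m) = m := by decide
lemma sw12f_invol : ∀ m, sw12f (sw12f m) = m := by decide

lemma hsw01 : CX01 * CX10 * CX01 = permMat sw01f := by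
  unfold CX01 CX10
  rw [permMat_mul, permMat_mul]
  exact congrArg permMat (funext (by decide))

lemma hsw12 : CX12 * CX21 * CX12 = permMat sw12f := by
  unfold CX12 CX21
  rw [permMat_mul, permMat_mul]
  exact congrArg permMat (funext (by decide))

/-! ### unitarity of the generators -/

lemma K0_u : K0 ∈ Matrix.unitaryGroup (Fin 8) ℂ := by
  rw [Matrix.mem_unitaryGroup_iff]
  ext r s
  fin_cases r <;> fin_cases s <;>
    norm_num [Matrix.mul_apply, Matrix.star_apply, Matrix.one_apply, Fin.sum_univ_eight,
      K0, Kmat, q0, q1, q2, b0, b1, b2, Fin.ext_iff, fv0, fv1, fv2, fv3, fv4, fv5, fv6, fv7,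
      Complex.star_def, map_inv₀, map_add, Complex.conj_I] <;>
    norm_num [Complex.ext_iff, Complex.inv_re, Complex.inv_im, Complex.div_re, Complex.div_im, Complex.normSq]

lemma omega8_u : omega8 ∈ Matrix.unitaryGroup (Fin 8) ℂ :=
  diag_unitary _ (fun m => by norm_num [Complex.star_def, Complex.conj_I, Complex.ext_iff])

lemma S0_u : S0 ∈ Matrix.unitaryGroup (Fin 8) ℂ :=
  diag_unitary _ (fun m => by
    fin_cases m <;>
    norm_num [b0, Complex.star_def, map_pow, Complex.conj_I, Complex.ext_iff,
      fv0, fv1, fv2, fv3, fv4, fv5, fv6, fv7])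

lemma S1_u : S1 ∈ Matrix.unitaryGroup (Fin 8) ℂ :=
  diag_unitary _ (fun m => by
    fin_cases m <;>
    norm_num [b1, Complex.star_def, map_pow, Complex.conj_I, Complex.ext_iff,
      fv0, fv1, fv2, fv3, fv4, fv5, fv6, fv7])

lemma S2_u : S2 ∈ Matrix.unitaryGroup (Fin 8) ℂ :=
  diag_unitary _ (fun m => by
    fin_cases m <;>
    norm_num [b2, Complex.star_def, map_pow, Complex.conj_I, Complex.ext_iff,
      fv0, fv1, fv2, fv3, fv4, fv5, fv6, fv7])

lemma CS01_u : CS01 ∈ Matrix.unitaryGroup (Fin 8) ℂ :=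
  diag_unitary _ (fun m => by
    fin_cases m <;>
    norm_num [b0, b1, b2, Complex.star_def, map_pow, Complex.conj_I, Complex.ext_iff,
      fv0, fv1, fv2, fv3, fv4, fv5, fv6, fv7])

lemma CS12_u : CS12 ∈ Matrix.unitaryGroup (Fin 8) ℂ :=
  diag_unitary _ (fun m => by
    fin_cases m <;>
    norm_num [b0, b1, b2, Complex.star_def, map_pow, Complex.conj_I, Complex.ext_iff,
      fv0, fv1, fv2, fv3, fv4, fv5, fv6, fv7])

lemma CS02_u : CS02 ∈ Matrix.unitaryGroup (Fin 8) ℂ :=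
  diag_unitary _ (fun m => by
    fin_cases m <;>
    norm_num [b0, b1, b2, Complex.star_def, map_pow, Complex.conj_I, Complex.ext_iff,
      fv0, fv1, fv2, fv3, fv4, fv5, fv6, fv7])

lemma CCZ_u : CCZ ∈ Matrix.unitaryGroup (Fin 8) ℂ :=
  diag_unitary _ (fun m => by
    fin_cases m <;>
    norm_num [b0, b1, b2, Complex.star_def, map_pow, Complex.ext_iff,
      fv0, fv1, fv2, fv3, fv4, fv5, fv6, fv7])

lemma CX01_u : CX01 ∈ Matrix.unitaryGroup (Fin 8) ℂ :=
  permMat_unitary (fun m => idx (b0 m) (b1 m + b0 m) (b2 m)) (by decide)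
lemma CX10_u : CX10 ∈ Matrix.unitaryGroup (Fin 8) ℂ :=
  permMat_unitary (fun m => idx (b0 m + b1 m) (b1 m) (b2 m)) (by decide)
lemma CX12_u : CX12 ∈ Matrix.unitaryGroup (Fin 8) ℂ :=
  permMat_unitary (fun m => idx (b0 m) (b1 m) (b2 m + b1 m)) (by decide)
lemma CX21_u : CX21 ∈ Matrix.unitaryGroup (Fin 8) ℂ :=
  permMat_unitary (fun m => idx (b0 m) (b1 m + b2 m) (b2 m)) (by decide)
lemma CCX0_u : CCX0 ∈ Matrix.unitaryGroup (Fin 8) ℂ :=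
  permMat_unitary (fun m => idx (b0 m + b1 m * b2 m) (b1 m) (b2 m)) (by decide)
lemma X0_u : X0 ∈ Matrix.unitaryGroup (Fin 8) ℂ :=
  permMat_unitary (fun m => idx (b0 m + 1) (b1 m) (b2 m)) (by decide)

/-! ### K conjugation identities -/

lemma midK1 : K1 = permMat sw01f * K0 * permMat sw01f := by
  rw [perm_conj sw01f sw01f_invol]
  ext r s
  fin_cases r <;> fin_cases s <;>
    norm_num [K0, K1, Kmat, q0, q1, q2, b0, b1, b2, sw01f, idx, Matrix.of_apply, Fin.ext_iff,
      fv0, fv1, fv2, fv3, fv4, fv5, fv6, fv7] <;>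
    norm_num [Complex.ext_iff, Complex.inv_re, Complex.inv_im, Complex.div_re, Complex.div_im, Complex.normSq]

lemma midK2 : K2 = permMat sw12f * K1 * permMat sw12f := by
  rw [perm_conj sw12f sw12f_invol]
  ext r s
  fin_cases r <;> fin_cases s <;>
    norm_num [K1, K2, Kmat, q0, q1, q2, b0, b1, b2, sw12f, idx, Matrix.of_apply, Fin.ext_iff,
      fv0, fv1, fv2, fv3, fv4, fv5, fv6, fv7] <;>
    norm_num [Complex.ext_iff, Complex.inv_re, Complex.inv_im, Complex.div_re, Complex.div_im, Complex.normSq]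

lemma K1_u : K1 ∈ Matrix.unitaryGroup (Fin 8) ℂ := by
  rw [midK1]
  exact mul_mem (mul_mem (permMat_unitary _ sw01f_invol) K0_u) (permMat_unitary _ sw01f_invol)

lemma K2_u : K2 ∈ Matrix.unitaryGroup (Fin 8) ℂ := by
  rw [midK2]
  exact mul_mem (mul_mem (permMat_unitary _ sw12f_invol) K1_u) (permMat_unitary _ sw12f_invol)

/-! ### diagonal identities -/

lemma midCS02 : CS02 = permMat sw12f * CS01 * permMat sw12f := by
  unfold CS01 CS02
  rw [perm_conj_diag sw12f sw12f_invol]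
  exact congrArg Matrix.diagonal (funext fun m => by
    rw [show b0 m * b2 m = b0 (sw12f m) * b1 (sw12f m) from by revert m; decide])

lemma mid8 : CS12 * CS02 * CCZ = CX01 * CS12 * CX01 := by
  unfold CS12 CS02 CCZ CX01
  rw [perm_conj_diag _ (by decide), Matrix.diagonal_mul_diagonal, Matrix.diagonal_mul_diagonal]
  refine congrArg Matrix.diagonal (funext fun m => ?_)
  fin_cases m <;>
    norm_num [b0, b1, b2, idx, fv0, fv1, fv2, fv3, fv4, fv5, fv6, fv7] <;>
    norm_num [Complex.ext_iff, Complex.inv_re, Complex.inv_im, Complex.div_re, Complex.div_im, Complex.normSq]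

/-! ### the CX-from-K identities -/

lemma mid1 : CX01 = omega8 * (K1 * (CS01 * CS01) * K1) := by
  ext r s
  fin_cases r <;> fin_cases s <;>
    norm_num [Matrix.mul_apply, Matrix.mul_diagonal, Matrix.diagonal_mul, Matrix.diagonal_mul_diagonal,
      Matrix.diagonal_apply, Fin.sum_univ_eight, CX01, CX10, CX12, CX21, X0, CCX0, permMat, idx,
      b0, b1, b2, K0, K1, K2, Kmat, q0, q1, q2, omega8, S0, S1, S2, CS01, CS12, CS02, CCZ,
      Fin.ext_iff, fv0, fv1, fv2, fv3, fv4, fv5, fv6, fv7] <;>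
    norm_num [Complex.ext_iff, Complex.inv_re, Complex.inv_im, Complex.div_re, Complex.div_im, Complex.normSq]

lemma mid2 : CX10 = omega8 * (K0 * (CS01 * CS01) * K0) := by
  ext r s
  fin_cases r <;> fin_cases s <;>
    norm_num [Matrix.mul_apply, Matrix.mul_diagonal, Matrix.diagonal_mul, Matrix.diagonal_mul_diagonal,
      Matrix.diagonal_apply, Fin.sum_univ_eight, CX01, CX10, CX12, CX21, X0, CCX0, permMat, idx,
      b0, b1, b2, K0, K1, K2, Kmat, q0, q1, q2, omega8, S0, S1, S2, CS01, CS12, CS02, CCZ,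
      Fin.ext_iff, fv0, fv1, fv2, fv3, fv4, fv5, fv6, fv7] <;>
    norm_num [Complex.ext_iff, Complex.inv_re, Complex.inv_im, Complex.div_re, Complex.div_im, Complex.normSq]

lemma mid3 : CX12 = omega8 * (K2 * (CS12 * CS12) * K2) := by
  ext r s
  fin_cases r <;> fin_cases s <;>
    norm_num [Matrix.mul_apply, Matrix.mul_diagonal, Matrix.diagonal_mul, Matrix.diagonal_mul_diagonal,
      Matrix.diagonal_apply, Fin.sum_univ_eight, CX01, CX10, CX12, CX21, X0, CCX0, permMat, idx,
      b0, b1, b2, K0, K1, K2, Kmat, q0, q1, q2, omega8, S0, S1, S2, CS01, CS12, CS02, CCZ,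
      Fin.ext_iff, fv0, fv1, fv2, fv3, fv4, fv5, fv6, fv7] <;>
    norm_num [Complex.ext_iff, Complex.inv_re, Complex.inv_im, Complex.div_re, Complex.div_im, Complex.normSq]

lemma mid4 : CX21 = omega8 * (K1 * (CS12 * CS12) * K1) := by
  ext r s
  fin_cases r <;> fin_cases s <;>
    norm_num [Matrix.mul_apply, Matrix.mul_diagonal, Matrix.diagonal_mul, Matrix.diagonal_mul_diagonal,
      Matrix.diagonal_apply, Fin.sum_univ_eight, CX01, CX10, CX12, CX21, X0, CCX0, permMat, idx,
      b0, b1, b2, K0, K1, K2, Kmat, q0, q1, q2, omega8, S0, S1, S2, CS01, CS12, CS02, CCZ,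
      Fin.ext_iff, fv0, fv1, fv2, fv3, fv4, fv5, fv6, fv7] <;>
    norm_num [Complex.ext_iff, Complex.inv_re, Complex.inv_im, Complex.div_re, Complex.div_im, Complex.normSq]

lemma mid5 : X0 = omega8 * (K0 * (S0 * S0) * K0) := by
  ext r s
  fin_cases r <;> fin_cases s <;>
    norm_num [Matrix.mul_apply, Matrix.mul_diagonal, Matrix.diagonal_mul, Matrix.diagonal_mul_diagonal,
      Matrix.diagonal_apply, Fin.sum_univ_eight, CX01, CX10, CX12, CX21, X0, CCX0, permMat, idx,
      b0, b1, b2, K0, K1, K2, Kmat, q0, q1, q2, omega8, S0, S1, S2, CS01, CS12, CS02, CCZ,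
      Fin.ext_iff, fv0, fv1, fv2, fv3, fv4, fv5, fv6, fv7] <;>
    norm_num [Complex.ext_iff, Complex.inv_re, Complex.inv_im, Complex.div_re, Complex.div_im, Complex.normSq]

lemma mid9 : CCX0 = omega8 * (K0 * CCZ * K0) := by
  ext r s
  fin_cases r <;> fin_cases s <;>
    norm_num [Matrix.mul_apply, Matrix.mul_diagonal, Matrix.diagonal_mul, Matrix.diagonal_mul_diagonal,
      Matrix.diagonal_apply, Fin.sum_univ_eight, CX01, CX10, CX12, CX21, X0, CCX0, permMat, idx,
      b0, b1, b2, K0, K1, K2, Kmat, q0, q1, q2, omega8, S0, S1, S2, CS01, CS12, CS02, CCZ,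
      Fin.ext_iff, fv0, fv1, fv2, fv3, fv4, fv5, fv6, fv7] <;>
    norm_num [Complex.ext_iff, Complex.inv_re, Complex.inv_im, Complex.div_re, Complex.div_im, Complex.normSq]

/-! ### group elements -/

noncomputable def uomega : U8 := ⟨omega8, omega8_u⟩
noncomputable def uK0 : U8 := ⟨K0, K0_u⟩
noncomputable def uK1 : U8 := ⟨K1, K1_u⟩
noncomputable def uK2 : U8 := ⟨K2, K2_u⟩
noncomputable def uS0 : U8 := ⟨S0, S0_u⟩
noncomputable def uS1 : U8 := ⟨S1, S1_u⟩
noncomputable def uS2 : U8 := ⟨S2, S2_u⟩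
noncomputable def uCS01 : U8 := ⟨CS01, CS01_u⟩
noncomputable def uCS12 : U8 := ⟨CS12, CS12_u⟩
noncomputable def uCS02 : U8 := ⟨CS02, CS02_u⟩
noncomputable def uCCZ : U8 := ⟨CCZ, CCZ_u⟩
noncomputable def uCX01 : U8 := ⟨CX01, CX01_u⟩
noncomputable def uCX10 : U8 := ⟨CX10, CX10_u⟩
noncomputable def uCX12 : U8 := ⟨CX12, CX12_u⟩
noncomputable def uCX21 : U8 := ⟨CX21, CX21_u⟩
noncomputable def uCCX0 : U8 := ⟨CCX0, CCX0_u⟩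
noncomputable def uX0 : U8 := ⟨X0, X0_u⟩

lemma coe_mul (a b : U8) : ((a * b : U8) : M8) = (a : M8) * (b : M8) := rfl

lemma eK1 : uK1 = uCX01 * uCX10 * uCX01 * uK0 * (uCX01 * uCX10 * uCX01) :=
  Subtype.ext (by
    simp only [coe_mul]
    show K1 = CX01 * CX10 * CX01 * K0 * (CX01 * CX10 * CX01)
    rw [hsw01]; exact midK1)

lemma eK2 : uK2 = uCX12 * uCX21 * uCX12 * uK1 * (uCX12 * uCX21 * uCX12) :=
  Subtype.ext (by
    simp only [coe_mul]
    show K2 = CX12 * CX21 * CX12 * K1 * (CX12 * CX21 * CX12)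
    rw [hsw12]; exact midK2)

lemma eCS02 : uCS02 = uCX12 * uCX21 * uCX12 * uCS01 * (uCX12 * uCX21 * uCX12) :=
  Subtype.ext (by
    simp only [coe_mul]
    show CS02 = CX12 * CX21 * CX12 * CS01 * (CX12 * CX21 * CX12)
    rw [hsw12]; exact midCS02)

lemma eCCZ : uCS12 * uCS02 * uCCZ = uCX01 * uCS12 * uCX01 :=
  Subtype.ext (by simp only [coe_mul]; exact mid8)

lemma eCX01 : uCX01 = uomega * (uK1 * (uCS01 * uCS01) * uK1) :=
  Subtype.ext (by simp only [coe_mul]; exact mid1)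
lemma eCX10 : uCX10 = uomega * (uK0 * (uCS01 * uCS01) * uK0) :=
  Subtype.ext (by simp only [coe_mul]; exact mid2)
lemma eCX12 : uCX12 = uomega * (uK2 * (uCS12 * uCS12) * uK2) :=
  Subtype.ext (by simp only [coe_mul]; exact mid3)
lemma eCX21 : uCX21 = uomega * (uK1 * (uCS12 * uCS12) * uK1) :=
  Subtype.ext (by simp only [coe_mul]; exact mid4)
lemma eX0 : uX0 = uomega * (uK0 * (uS0 * uS0) * uK0) :=
  Subtype.ext (by simp only [coe_mul]; exact mid5)
lemma eCCX0 : uCCX0 = uomega * (uK0 * uCCZ * uK0) :=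
  Subtype.ext (by simp only [coe_mul]; exact mid9)

/-! ### the two generating sets -/

def SL : Set U8 := {u : U8 | (u : M8) ∈ ({omega8, K0, K1, K2, S0, S1, S2, CS01, CS12} : Set M8)}

def SR : Set U8 := {u : U8 | (u : M8) ∈
  ({K0} ∪ {CX01, CX10, CX12, CX21, CCX0, X0}
    ∪ {omega8, S0, S1, S2, CS01, CS12, CS02, CCZ} : Set M8)}

lemma mem_of_coe {R : Subgroup U8} {u v : U8} (h : (u : M8) = (v : M8)) (hm : v ∈ R) :
    u ∈ R := by rwa [Subtype.ext h]

-- base memberships on the right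
lemma R_omega : uomega ∈ Subgroup.closure SR := Subgroup.subset_closure (by simp [SR, uomega])
lemma R_K0 : uK0 ∈ Subgroup.closure SR := Subgroup.subset_closure (by simp [SR, uK0])
lemma R_S0 : uS0 ∈ Subgroup.closure SR := Subgroup.subset_closure (by simp [SR, uS0])
lemma R_S1 : uS1 ∈ Subgroup.closure SR := Subgroup.subset_closure (by simp [SR, uS1])
lemma R_S2 : uS2 ∈ Subgroup.closure SR := Subgroup.subset_closure (by simp [SR, uS2])
lemma R_CS01 : uCS01 ∈ Subgroup.closure SR := Subgroup.subset_closure (by simp [SR, uCS01])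
lemma R_CS12 : uCS12 ∈ Subgroup.closure SR := Subgroup.subset_closure (by simp [SR, uCS12])
lemma R_CX01 : uCX01 ∈ Subgroup.closure SR := Subgroup.subset_closure (by simp [SR, uCX01])
lemma R_CX10 : uCX10 ∈ Subgroup.closure SR := Subgroup.subset_closure (by simp [SR, uCX10])
lemma R_CX12 : uCX12 ∈ Subgroup.closure SR := Subgroup.subset_closure (by simp [SR, uCX12])
lemma R_CX21 : uCX21 ∈ Subgroup.closure SR := Subgroup.subset_closure (by simp [SR, uCX21])

lemma R_K1 : uK1 ∈ Subgroup.closure SR := by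
  rw [eK1]
  exact mul_mem (mul_mem (mul_mem (mul_mem R_CX01 R_CX10) R_CX01) R_K0)
    (mul_mem (mul_mem R_CX01 R_CX10) R_CX01)

lemma R_K2 : uK2 ∈ Subgroup.closure SR := by
  rw [eK2]
  exact mul_mem (mul_mem (mul_mem (mul_mem R_CX12 R_CX21) R_CX12) R_K1)
    (mul_mem (mul_mem R_CX12 R_CX21) R_CX12)

-- base memberships on the left
lemma L_omega : uomega ∈ Subgroup.closure SL := Subgroup.subset_closure (by simp [SL, uomega])
lemma L_K0 : uK0 ∈ Subgroup.closure SL := Subgroup.subset_closure (by simp [SL, uK0])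
lemma L_K1 : uK1 ∈ Subgroup.closure SL := Subgroup.subset_closure (by simp [SL, uK1])
lemma L_K2 : uK2 ∈ Subgroup.closure SL := Subgroup.subset_closure (by simp [SL, uK2])
lemma L_S0 : uS0 ∈ Subgroup.closure SL := Subgroup.subset_closure (by simp [SL, uS0])
lemma L_S1 : uS1 ∈ Subgroup.closure SL := Subgroup.subset_closure (by simp [SL, uS1])
lemma L_S2 : uS2 ∈ Subgroup.closure SL := Subgroup.subset_closure (by simp [SL, uS2])
lemma L_CS01 : uCS01 ∈ Subgroup.closure SL := Subgroup.subset_closure (by simp [SL, uCS01])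
lemma L_CS12 : uCS12 ∈ Subgroup.closure SL := Subgroup.subset_closure (by simp [SL, uCS12])

lemma L_CX01 : uCX01 ∈ Subgroup.closure SL := by
  rw [eCX01]
  exact mul_mem L_omega (mul_mem (mul_mem L_K1 (mul_mem L_CS01 L_CS01)) L_K1)
lemma L_CX10 : uCX10 ∈ Subgroup.closure SL := by
  rw [eCX10]
  exact mul_mem L_omega (mul_mem (mul_mem L_K0 (mul_mem L_CS01 L_CS01)) L_K0)
lemma L_CX12 : uCX12 ∈ Subgroup.closure SL := by
  rw [eCX12]
  exact mul_mem L_omega (mul_mem (mul_mem L_K2 (mul_mem L_CS12 L_CS12)) L_K2)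
lemma L_CX21 : uCX21 ∈ Subgroup.closure SL := by
  rw [eCX21]
  exact mul_mem L_omega (mul_mem (mul_mem L_K1 (mul_mem L_CS12 L_CS12)) L_K1)
lemma L_X0 : uX0 ∈ Subgroup.closure SL := by
  rw [eX0]
  exact mul_mem L_omega (mul_mem (mul_mem L_K0 (mul_mem L_S0 L_S0)) L_K0)
lemma L_CS02 : uCS02 ∈ Subgroup.closure SL := by
  rw [eCS02]
  exact mul_mem (mul_mem (mul_mem (mul_mem L_CX12 L_CX21) L_CX12) L_CS01)
    (mul_mem (mul_mem L_CX12 L_CX21) L_CX12)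
lemma L_CCZ : uCCZ ∈ Subgroup.closure SL := by
  have h2 : uCCZ = (uCS12 * uCS02)⁻¹ * (uCX01 * uCS12 * uCX01) := by
    rw [← eCCZ]; group
  rw [h2]
  exact mul_mem (inv_mem (mul_mem L_CS12 L_CS02))
    (mul_mem (mul_mem L_CX01 L_CS12) L_CX01)
lemma L_CCX0 : uCCX0 ∈ Subgroup.closure SL := by
  rw [eCCX0]
  exact mul_mem L_omega (mul_mem (mul_mem L_K0 L_CCZ) L_K0)

lemma main : Subgroup.closure SL = Subgroup.closure SR := by
  apply le_antisymm
  · rw [Subgroup.closure_le]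
    rintro u hu
    simp only [SL, Set.mem_setOf_eq, Set.mem_insert_iff, Set.mem_singleton_iff] at hu
    obtain h|h|h|h|h|h|h|h|h := hu
    · exact mem_of_coe (v := uomega) h R_omega
    · exact mem_of_coe (v := uK0) h R_K0
    · exact mem_of_coe (v := uK1) h R_K1
    · exact mem_of_coe (v := uK2) h R_K2
    · exact mem_of_coe (v := uS0) h R_S0
    · exact mem_of_coe (v := uS1) h R_S1
    · exact mem_of_coe (v := uS2) h R_S2
    · exact mem_of_coe (v := uCS01) h R_CS01
    · exact mem_of_coe (v := uCS12) h R_CS12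
  · rw [Subgroup.closure_le]
    rintro u hu
    simp only [SR, Set.mem_setOf_eq, Set.mem_union, Set.mem_insert_iff,
      Set.mem_singleton_iff] at hu
    obtain (h|h)|h := hu
    · exact mem_of_coe (v := uK0) h L_K0
    · obtain h|h|h|h|h|h := h
      · exact mem_of_coe (v := uCX01) h L_CX01
      · exact mem_of_coe (v := uCX10) h L_CX10
      · exact mem_of_coe (v := uCX12) h L_CX12
      · exact mem_of_coe (v := uCX21) h L_CX21
      · exact mem_of_coe (v := uCCX0) h L_CCX0
      · exact mem_of_coe (v := uX0) h L_X0
    · obtain h|h|h|h|h|h|h|h := h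
      · exact mem_of_coe (v := uomega) h L_omega
      · exact mem_of_coe (v := uS0) h L_S0
      · exact mem_of_coe (v := uS1) h L_S1
      · exact mem_of_coe (v := uS2) h L_S2
      · exact mem_of_coe (v := uCS01) h L_CS01
      · exact mem_of_coe (v := uCS12) h L_CS12
      · exact mem_of_coe (v := uCS02) h L_CS02
      · exact mem_of_coe (v := uCCZ) h L_CCZ

end CCS

/-- CliffordCS(3) equals the subgroup of U(8,ℂ) generated by `{K₀} ∪ X_P ∪ X_D`, where
`X_P = {CX₀₁, CX₁₀, CX₁₂, CX₂₁, CCX₀, X₀}` and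
`X_D = {ω, S₀, S₁, S₂, CS₀₁, CS₁₂, CS₀₂, CCZ}`. -/
theorem CliffordCS3_eq_closure_K0_P_D :
    CliffordCS3 =
      Subgroup.closure {u : U8 | (u : M8) ∈
        ({K0} ∪ {CX01, CX10, CX12, CX21, CCX0, X0}
          ∪ {omega8, S0, S1, S2, CS01, CS12, CS02, CCZ} : Set M8)} := by
  exact main
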